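/- arXiv:1508.03984 — 3 statements merged into one kernel-verified Lean document; each statement's English description precedes it below -/
import Mathlib

section
/- Let T = (T_{i,j}) be an abstract Uryson operator from ℝⁿ to ℝᵐ. Then T is a finite element of the vector lattice U(ℝⁿ, ℝᵐ) if and only if each constituent function T_{i,j} : ℝ → ℝ has support contained in some compact interval. Moreover Φ₁(U(ℝⁿ,ℝᵐ)) = Φ₂(U(ℝⁿ,ℝᵐ)). -/
section Defs

variable {E : Type*} [Lattice E] [AddCommGroup E]
  [CovariantClass E E (· + ·) (· ≤ ·)] [Module ℝ E]
variable {F : Type*} [ConditionallyCompleteLattice F] [AddCommGroup F]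
  [CovariantClass F F (· + ·) (· ≤ ·)] [Module ℝ F]

/-- `z` is a fragment of `x`. -/
def IsFragment (z x : E) : Prop := |z| ⊓ |x - z| = 0

/-- Orthogonal additivity. -/
def IsOrthAdd (T : E → F) : Prop :=
  ∀ x y : E, |x| ⊓ |y| = 0 → T (x + y) = T x + T y

/-- Order boundedness. -/
def IsOrderBounded (T : E → F) : Prop :=
  ∀ a b : E, ∃ c d : F, ∀ x : E, a ≤ x → x ≤ b → c ≤ T x ∧ T x ≤ d

/-- Abstract Uryson operator: orthogonally additive and order bounded. -/
def IsUryson (T : E → F) : Prop := IsOrthAdd T ∧ IsOrderBounded T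

/-- A list gives a disjoint decomposition of `x`. -/
def DisjDecomp (x : E) (l : List E) : Prop :=
  l.Pairwise (fun a b => |a| ⊓ |b| = 0) ∧ l.sum = x

/-- Modulus of an abstract Uryson operator:
`|T|(x) = sup {Σᵢ |T xᵢ| : x = x₁ ⊔ ⋯ ⊔ xₙ}`. -/
noncomputable def uAbs (T : E → F) (x : E) : F :=
  sSup {s : F | ∃ l : List E, DisjDecomp x l ∧ s = (l.map fun a => |T a|).sum}

/-- Meet of two positive abstract Uryson operators:
`(A ∧ B)(x) = inf {Σᵢ A xᵢ ⊓ B xᵢ : x = x₁ ⊔ ⋯ ⊔ xₙ}`. -/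
noncomputable def uMeet (A B : E → F) (x : E) : F :=
  sInf {r : F | ∃ l : List E, DisjDecomp x l ∧ r = (l.map fun a => A a ⊓ B a).sum}

/-- `Z` is a majorant of `φ` within the class `𝒰` of operators (the order on
operators being pointwise): for every `T ∈ 𝒰` there is `c > 0` with
`|T| ∧ n|φ| ≤ c Z` for all `n`. -/
def IsMajorantIn (𝒰 : (E → F) → Prop) (Z φ : E → F) : Prop :=
  𝒰 Z ∧ ∀ T : E → F, 𝒰 T → ∃ c : ℝ, 0 < c ∧ ∀ (n : ℕ) (x : E),
    uMeet (uAbs T) (fun y => (n : ℝ) • uAbs φ y) x ≤ c • Z x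

/-- `φ` is a finite element of the vector lattice of operators `𝒰`. -/
def UFinite (𝒰 : (E → F) → Prop) (φ : E → F) : Prop :=
  𝒰 φ ∧ ∃ Z : E → F, IsMajorantIn 𝒰 Z φ

end Defs

open scoped Classical

namespace U9

variable {n m : ℕ}

abbrev Disj {n : ℕ} (a b : Fin n → ℝ) : Prop := |a| ⊓ |b| = (0 : Fin n → ℝ)

lemma disj_iff {a b : Fin n → ℝ} : Disj a b ↔ ∀ k, a k = 0 ∨ b k = 0 := by
  constructor
  · intro h k
    have h' : min |a k| |b k| = 0 := congrFun h k
    rcases le_total |a k| |b k| with h''|h''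
    · left; rw [min_eq_left h''] at h'; exact abs_eq_zero.mp h'
    · right; rw [min_eq_right h''] at h'; exact abs_eq_zero.mp h'
  · intro h; funext k
    show min |a k| |b k| = 0
    rcases h k with h'|h'
    · rw [h']; simp [min_eq_left, abs_nonneg]
    · rw [h']; simp [min_eq_right, abs_nonneg]

lemma head_sum_zero {a : Fin n → ℝ} {t : List (Fin n → ℝ)}
    (h : ∀ b ∈ t, Disj a b) {k : Fin n} (ha : a k ≠ 0) : t.sum k = 0 := by
  induction t with
  | nil => rfl
  | cons b t ih =>
    have hb : b k = 0 := by
      rcases disj_iff.mp (h b (List.mem_cons_self)) k with h'|h'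
      · exact absurd h' ha
      · exact h'
    have := ih (fun c hc => h c (List.mem_cons_of_mem _ hc))
    simp [List.sum_cons, hb, this]

lemma head_disj_sum {a : Fin n → ℝ} {t : List (Fin n → ℝ)}
    (h : ∀ b ∈ t, Disj a b) : Disj a t.sum := by
  rw [disj_iff]
  intro k
  by_cases ha : a k = 0
  · exact Or.inl ha
  · exact Or.inr (head_sum_zero h ha)

lemma orthAdd_zero {T : (Fin n → ℝ) → Fin m → ℝ} (hT : IsOrthAdd T) : T 0 = 0 := by
  have h := hT 0 0 (by simp)
  rw [add_zero] at h
  have : T 0 + T 0 = T 0 + 0 := by rw [add_zero]; exact h.symm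
  exact (add_left_cancel this)

lemma phi_zero_of_single {a : Fin n → ℝ} {j : Fin n}
    (h : ∀ k, k ≠ j → a k = 0) (haj : a j = 0) : a = 0 := by
  funext k
  by_cases hk : k = j
  · rw [hk]; exact haj
  · exact h k hk

lemma list_nonneg_sum_zero : ∀ {l : List ℝ}, (∀ x ∈ l, 0 ≤ x) → l.sum = 0 → ∀ x ∈ l, x = 0 := by
  intro l
  induction l with
  | nil => intro _ _ x hx; simp at hx
  | cons a t ih =>
    intro hpos hsum x hx
    have hta : 0 ≤ a := hpos a (List.mem_cons_self)
    have htt : 0 ≤ t.sum := List.sum_nonneg (fun y hy => hpos y (List.mem_cons_of_mem _ hy))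
    rw [List.sum_cons] at hsum
    have ha0 : a = 0 := by linarith
    have hts : t.sum = 0 := by linarith
    rcases List.mem_cons.mp hx with h|h
    · rw [h]; exact ha0
    · exact ih (fun y hy => hpos y (List.mem_cons_of_mem _ hy)) hts x h

lemma sum_abs_coord {l : List (Fin n → ℝ)} (hp : l.Pairwise Disj) (k : Fin n) :
    (l.map fun a => |a k|).sum = |l.sum k| := by
  induction l with
  | nil => show (0:ℝ) = |(0 : Fin n → ℝ) k|; simp
  | cons a t ih =>
    have hsum : (a :: t).sum k = a k + t.sum k := congrFun (List.sum_cons) k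
    rw [List.map_cons, List.sum_cons, hsum, ih (List.Pairwise.of_cons hp)]
    by_cases haj : a k = 0
    · rw [haj]; simp
    · rw [head_sum_zero (fun b hb => List.rel_of_pairwise_cons hp hb) haj]
      simp

lemma decomp_all_supported {l : List (Fin n → ℝ)} {j : Fin n} {r : ℝ}
    (hl : DisjDecomp (Pi.single j r) l) : ∀ a ∈ l, ∀ k, k ≠ j → a k = 0 := by
  intro a ha k hk
  have h0 : (l.map fun a => |a k|).sum = 0 := by
    rw [sum_abs_coord hl.1 k, hl.2]
    simp [Pi.single_apply, hk]
  have := list_nonneg_sum_zero (l := l.map fun a => |a k|)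
    (by intro x hx; obtain ⟨b, _, rfl⟩ := List.mem_map.mp hx; exact abs_nonneg _)
    h0 |a k| (List.mem_map.mpr ⟨a, ha, rfl⟩)
  exact abs_eq_zero.mp this

lemma decomp_zero_all_zero {l : List (Fin n → ℝ)}
    (hl : DisjDecomp (0 : Fin n → ℝ) l) : ∀ a ∈ l, a = 0 := by
  intro a ha
  funext k
  have h0 : (l.map fun a => |a k|).sum = 0 := by
    rw [sum_abs_coord hl.1 k, hl.2]; simp
  have := list_nonneg_sum_zero (l := l.map fun a => |a k|)
    (by intro x hx; obtain ⟨b, _, rfl⟩ := List.mem_map.mp hx; exact abs_nonneg _)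
    h0 |a k| (List.mem_map.mpr ⟨a, ha, rfl⟩)
  exact abs_eq_zero.mp this

lemma map_sum_zero {β : Type*} [AddCommMonoid β] {f : (Fin n → ℝ) → β}
    (hf : f 0 = 0) {l : List (Fin n → ℝ)} (h : ∀ a ∈ l, a = 0) :
    (l.map f).sum = 0 := by
  apply List.sum_eq_zero
  intro x hx
  obtain ⟨b, hb, rfl⟩ := List.mem_map.mp hx
  rw [h b hb, hf]

lemma decomp_single_aux {β : Type*} [AddCommMonoid β] (f : (Fin n → ℝ) → β)
    (hf : f 0 = 0) (j : Fin n) (r : ℝ) (hr : r ≠ 0) :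
    ∀ l : List (Fin n → ℝ), l.Pairwise Disj →
      (∀ a ∈ l, ∀ k, k ≠ j → a k = 0) → l.sum = Pi.single j r →
      (l.map f).sum = f (Pi.single j r) := by
  intro l
  induction l with
  | nil =>
    intro _ _ hs
    exfalso
    have : (0 : ℝ) = (Pi.single j r : Fin n → ℝ) j := by
      rw [← hs]; rfl
    rw [Pi.single_eq_same] at this
    exact hr this.symm
  | cons a t ih =>
    intro hp hsupp hs
    rw [List.sum_cons] at hs
    by_cases haj : a j = 0
    · have ha0 : a = 0 :=
        phi_zero_of_single (hsupp a (List.mem_cons_self)) haj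
      have hts : t.sum = Pi.single j r := by rw [ha0, zero_add] at hs; exact hs
      rw [List.map_cons, List.sum_cons, ha0, hf, zero_add]
      exact ih (List.Pairwise.of_cons hp)
        (fun b hb => hsupp b (List.mem_cons_of_mem _ hb)) hts
    · have ht0 : ∀ b ∈ t, b = 0 := by
        intro b hb
        apply phi_zero_of_single (hsupp b (List.mem_cons_of_mem _ hb))
        rcases disj_iff.mp (List.rel_of_pairwise_cons hp hb) j with h'|h'
        · exact absurd h' haj
        · exact h'
      have hts : t.sum = 0 := List.sum_eq_zero ht0
      have ha : a = Pi.single j r := by rw [hts, add_zero] at hs; exact hs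
      rw [List.map_cons, List.sum_cons, ha, map_sum_zero hf ht0, add_zero]

lemma decomp_single_sum {β : Type*} [AddCommMonoid β] {f : (Fin n → ℝ) → β}
    (hf : f 0 = 0) {j : Fin n} {r : ℝ} (hr : r ≠ 0) {l : List (Fin n → ℝ)}
    (hl : DisjDecomp (Pi.single j r) l) : (l.map f).sum = f (Pi.single j r) :=
  decomp_single_aux f hf j r hr l hl.1 (decomp_all_supported hl) hl.2

lemma decomp_value {f : (Fin n → ℝ) → Fin m → ℝ} (hf : f 0 = 0) (j : Fin n) (r : ℝ) :
    {s : Fin m → ℝ | ∃ l, DisjDecomp (Pi.single j r) l ∧ s = (l.map f).sum}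
      = {f (Pi.single j r)} := by
  ext s
  simp only [Set.mem_setOf_eq, Set.mem_singleton_iff]
  constructor
  · rintro ⟨l, hl, rfl⟩
    by_cases hr : r = 0
    · subst hr
      rw [Pi.single_zero] at hl ⊢
      rw [map_sum_zero hf (decomp_zero_all_zero hl), hf]
    · exact decomp_single_sum hf hr hl
  · rintro rfl
    exact ⟨[Pi.single j r], ⟨List.pairwise_singleton _ _, by simp⟩, by simp⟩

lemma decomp_value_zero {f : (Fin n → ℝ) → Fin m → ℝ} (hf : f 0 = 0) :
    {s : Fin m → ℝ | ∃ l, DisjDecomp (0 : Fin n → ℝ) l ∧ s = (l.map f).sum}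
      = {(0 : Fin m → ℝ)} := by
  ext s
  simp only [Set.mem_setOf_eq, Set.mem_singleton_iff]
  constructor
  · rintro ⟨l, hl, rfl⟩
    exact map_sum_zero hf (decomp_zero_all_zero hl)
  · rintro rfl
    exact ⟨[], ⟨List.Pairwise.nil, rfl⟩, rfl⟩

lemma uAbs_single {T : (Fin n → ℝ) → Fin m → ℝ} (hT0 : T 0 = 0) (j : Fin n) (r : ℝ) :
    uAbs T (Pi.single j r) = |T (Pi.single j r)| := by
  unfold uAbs
  rw [decomp_value (f := fun a => |T a|) (by show |T 0| = 0; rw [hT0, abs_zero]) j r]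
  exact csSup_singleton _

lemma uAbs_zero {T : (Fin n → ℝ) → Fin m → ℝ} (hT0 : T 0 = 0) :
    uAbs T (0 : Fin n → ℝ) = 0 := by
  unfold uAbs
  rw [decomp_value_zero (f := fun a => |T a|) (by show |T 0| = 0; rw [hT0, abs_zero])]
  exact csSup_singleton _

lemma uMeet_single {A B : (Fin n → ℝ) → Fin m → ℝ} (hA0 : A 0 = 0) (hB0 : B 0 = 0)
    (j : Fin n) (r : ℝ) :
    uMeet A B (Pi.single j r) = A (Pi.single j r) ⊓ B (Pi.single j r) := by
  unfold uMeet
  rw [decomp_value (f := fun a => A a ⊓ B a) (by simp only [hA0, hB0]; simp) j r]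
  exact csInf_singleton _

lemma uAbs_nonneg (T : (Fin n → ℝ) → Fin m → ℝ) (x : Fin n → ℝ) :
    (0 : Fin m → ℝ) ≤ uAbs T x := by
  intro i
  show (0:ℝ) ≤ ⨆ f : {s : Fin m → ℝ | ∃ l, DisjDecomp x l ∧ s = (l.map fun a => |T a|).sum},
    (f : Fin m → ℝ) i
  apply Real.iSup_nonneg
  rintro ⟨s, l, hl, rfl⟩
  have : (0 : Fin m → ℝ) ≤ (l.map fun a => |T a|).sum := by
    apply List.sum_nonneg
    intro y hy
    obtain ⟨b, _, rfl⟩ := List.mem_map.mp hy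
    exact abs_nonneg _
  exact this i

lemma orthAdd_list {T : (Fin n → ℝ) → Fin m → ℝ} (hT : IsOrthAdd T)
    {l : List (Fin n → ℝ)} (hp : l.Pairwise Disj) : T l.sum = (l.map T).sum := by
  induction l with
  | nil => exact orthAdd_zero hT
  | cons a t ih =>
    rw [List.sum_cons, List.map_cons, List.sum_cons,
      hT a t.sum (head_disj_sum (fun b hb => List.rel_of_pairwise_cons hp hb)),
      ih (List.Pairwise.of_cons hp)]

noncomputable def phiOp (Tm : Fin m → Fin n → ℝ → ℝ) : (Fin n → ℝ) → Fin m → ℝ :=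
  fun x i => ∑ j, Tm i j (x j)

lemma phi_zero {Tm : Fin m → Fin n → ℝ → ℝ} (h0 : ∀ i j, Tm i j 0 = 0) :
    phiOp Tm 0 = 0 := by
  funext i
  show (∑ j, Tm i j 0) = 0
  simp [h0]

lemma phi_single {Tm : Fin m → Fin n → ℝ → ℝ} (h0 : ∀ i j, Tm i j 0 = 0)
    (j : Fin n) (r : ℝ) (i : Fin m) : phiOp Tm (Pi.single j r) i = Tm i j r := by
  show (∑ j', Tm i j' ((Pi.single j r : Fin n → ℝ) j')) = Tm i j r
  rw [Finset.sum_eq_single j]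
  · rw [Pi.single_eq_same]
  · intro b _ hb
    rw [Pi.single_eq_of_ne hb, h0]
  · intro h; exact absurd (Finset.mem_univ j) h

lemma isOrthAdd_phi {Tm : Fin m → Fin n → ℝ → ℝ} (h0 : ∀ i j, Tm i j 0 = 0) :
    IsOrthAdd (phiOp Tm) := by
  intro x y hxy
  funext i
  show (∑ j, Tm i j ((x + y) j)) = (∑ j, Tm i j (x j)) + ∑ j, Tm i j (y j)
  rw [← Finset.sum_add_distrib]
  apply Finset.sum_congr rfl
  intro j _
  have hj : (x + y) j = x j + y j := rfl
  rw [hj]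
  rcases disj_iff.mp hxy j with h|h
  · rw [h, zero_add, h0 i j, zero_add]
  · rw [h, add_zero, h0 i j, add_zero]

lemma isOrderBounded_phi {Tm : Fin m → Fin n → ℝ → ℝ}
    (hb : ∀ i j, ∀ a b : ℝ, ∃ c : ℝ, ∀ r : ℝ, a ≤ r → r ≤ b → |Tm i j r| ≤ c) :
    IsOrderBounded (phiOp Tm) := by
  intro a b
  have hC : ∀ i j, ∃ c, ∀ r, a j ≤ r → r ≤ b j → |Tm i j r| ≤ c :=
    fun i j => hb i j (a j) (b j)
  choose C hC using hC
  refine ⟨fun i => -(∑ j, |C i j|), fun i => ∑ j, |C i j|, ?_⟩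
  intro x hax hxb
  have habs : ∀ i, |phiOp Tm x i| ≤ ∑ j, |C i j| := by
    intro i
    calc |∑ j, Tm i j (x j)| ≤ ∑ j, |Tm i j (x j)| := Finset.abs_sum_le_sum_abs _ _
      _ ≤ ∑ j, |C i j| := Finset.sum_le_sum
        (fun j _ => le_trans (hC i j (x j) (hax j) (hxb j)) (le_abs_self _))
  exact ⟨fun i => (abs_le.mp (habs i)).1, fun i => (abs_le.mp (habs i)).2⟩

lemma isUryson_phi {Tm : Fin m → Fin n → ℝ → ℝ} (h0 : ∀ i j, Tm i j 0 = 0)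
    (hb : ∀ i j, ∀ a b : ℝ, ∃ c : ℝ, ∀ r : ℝ, a ≤ r → r ≤ b → |Tm i j r| ≤ c) :
    IsUryson (phiOp Tm) := ⟨isOrthAdd_phi h0, isOrderBounded_phi hb⟩

noncomputable def zeta (R r : ℝ) : ℝ := if r ≠ 0 ∧ |r| ≤ R then 1 else 0

lemma zeta_zero (R : ℝ) : zeta R 0 = 0 := by simp [zeta]

lemma zeta_props (R : ℝ) : ∀ i : Fin m, ∀ j : Fin n, (fun (_ : Fin m) (_ : Fin n) => zeta R) i j 0 = 0 :=
  fun _ _ => zeta_zero R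

lemma zeta_bdd : ∀ (R : ℝ) (a b : ℝ), ∃ c : ℝ, ∀ r : ℝ, a ≤ r → r ≤ b → |zeta R r| ≤ c := by
  intro R a b
  refine ⟨1, fun r _ _ => ?_⟩
  unfold zeta
  split <;> norm_num

lemma majorant_back {Tm : Fin m → Fin n → ℝ → ℝ} (h0 : ∀ i j, Tm i j 0 = 0)
    {R : ℝ} (hR : 0 < R) (hsupp : ∀ i j r, Tm i j r ≠ 0 → |r| ≤ R)
    (T : (Fin n → ℝ) → Fin m → ℝ) (hT : IsUryson T) :
    ∃ c : ℝ, 0 < c ∧ ∀ (k : ℕ) (x : Fin n → ℝ),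
      uMeet (uAbs T) (fun y => (k : ℝ) • uAbs (phiOp Tm) y) x
        ≤ c • phiOp (fun (_ : Fin m) (_ : Fin n) => zeta R) x := by
  obtain ⟨hTo, hTb⟩ := hT
  have hT0 : T 0 = 0 := orthAdd_zero hTo
  obtain ⟨c', d', hcd⟩ := hTb (fun _ => -R) (fun _ => R)
  set M : ℝ := 1 + ∑ i, (|c' i| + |d' i|) with hM
  have hMpos : 0 < M := by
    have : (0:ℝ) ≤ ∑ i, (|c' i| + |d' i|) :=
      Finset.sum_nonneg (fun i _ => by positivity)
    linarith
  have hTbd : ∀ y : Fin n → ℝ, (∀ j, |y j| ≤ R) → ∀ i, |T y i| ≤ M := by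
    intro y hy i
    have h1 : (fun _ => -R : Fin n → ℝ) ≤ y := fun j => (abs_le.mp (hy j)).1
    have h2 : y ≤ (fun _ => R : Fin n → ℝ) := fun j => (abs_le.mp (hy j)).2
    obtain ⟨hc, hd⟩ := hcd y h1 h2
    have hterm : |c' i| + |d' i| ≤ ∑ i', (|c' i'| + |d' i'|) :=
      Finset.single_le_sum (f := fun i' => |c' i'| + |d' i'|)
        (fun i' _ => by positivity) (Finset.mem_univ i)
    have hci := hc i
    have hdi := hd i
    have h3 : -|c' i| ≤ c' i := neg_abs_le _
    have h4 : d' i ≤ |d' i| := le_abs_self _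
    rw [abs_le]
    constructor <;> [skip; skip] <;>
      · simp only [hM]
        nlinarith [abs_nonneg (c' i), abs_nonneg (d' i)]
  refine ⟨M, hMpos, ?_⟩
  intro k x
  set l : List (Fin n → ℝ) := List.ofFn (fun j => Pi.single j (x j)) with hldef
  have hpair : l.Pairwise Disj := by
    rw [hldef, List.pairwise_ofFn]
    intro j j' hlt
    rw [disj_iff]
    intro k'
    by_cases h1 : k' = j
    · right
      subst h1
      simp [Pi.single_apply, ne_of_lt hlt]
    · left
      simp [Pi.single_apply, h1]
  have hsum : l.sum = x := by
    rw [hldef, List.sum_ofFn]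
    exact Finset.univ_sum_single x
  have hdec : DisjDecomp x l := ⟨hpair, hsum⟩
  have hBdd : BddBelow {r : Fin m → ℝ | ∃ l', DisjDecomp x l' ∧
      r = (l'.map fun a => uAbs T a ⊓ ((k:ℝ) • uAbs (phiOp Tm) a)).sum} := by
    refine ⟨0, ?_⟩
    rintro s ⟨l', _, rfl⟩
    apply List.sum_nonneg
    intro y hy
    obtain ⟨a, _, rfl⟩ := List.mem_map.mp hy
    refine le_inf (uAbs_nonneg T a) ?_
    intro i
    show (0:ℝ) ≤ (k:ℝ) * uAbs (phiOp Tm) a i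
    exact mul_nonneg (Nat.cast_nonneg k) (uAbs_nonneg _ a i)
  have hle : uMeet (uAbs T) (fun y => (k:ℝ) • uAbs (phiOp Tm) y) x
      ≤ (l.map fun a => uAbs T a ⊓ ((k:ℝ) • uAbs (phiOp Tm) a)).sum :=
    csInf_le hBdd ⟨l, hdec, rfl⟩
  refine le_trans hle ?_
  have hmap : (l.map fun a => uAbs T a ⊓ ((k:ℝ) • uAbs (phiOp Tm) a)).sum
      = ∑ j, (uAbs T (Pi.single j (x j)) ⊓ ((k:ℝ) • uAbs (phiOp Tm) (Pi.single j (x j)))) := by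
    rw [hldef, List.map_ofFn, List.sum_ofFn]
    rfl
  rw [hmap]
  intro i
  have happ : (∑ j, (uAbs T (Pi.single j (x j)) ⊓ ((k:ℝ) • uAbs (phiOp Tm) (Pi.single j (x j))))) i
      = ∑ j, min (|T (Pi.single j (x j)) i|) ((k:ℝ) * |phiOp Tm (Pi.single j (x j)) i|) := by
    rw [Finset.sum_apply]
    apply Finset.sum_congr rfl
    intro j _
    rw [uAbs_single hT0, uAbs_single (phi_zero h0)]
    rfl
  have hrhs : (M • phiOp (fun (_ : Fin m) (_ : Fin n) => zeta R) x) i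
      = ∑ j, M * zeta R (x j) := by
    show M * (∑ j, zeta R (x j)) = _
    rw [Finset.mul_sum]
  rw [happ, hrhs]
  apply Finset.sum_le_sum
  intro j _
  by_cases hx0 : x j = 0
  · have hs0 : (Pi.single j (x j) : Fin n → ℝ) = 0 := by rw [hx0, Pi.single_zero]
    rw [hs0, hx0, zeta_zero, mul_zero, hT0, phi_zero h0]
    simp
  by_cases hxR : |x j| ≤ R
  · have hz : zeta R (x j) = 1 := if_pos ⟨hx0, hxR⟩
    rw [hz, mul_one]
    refine le_trans (min_le_left _ _) ?_
    apply hTbd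
    intro j'
    by_cases h : j' = j
    · subst h; rw [Pi.single_eq_same]; exact hxR
    · rw [Pi.single_eq_of_ne h]
      simpa using le_of_lt hR
  · have hz : zeta R (x j) = 0 := if_neg (by rintro ⟨_, h⟩; exact hxR h)
    have hphi0 : phiOp Tm (Pi.single j (x j)) i = 0 := by
      rw [phi_single h0]
      by_contra h
      exact hxR (hsupp i j (x j) h)
    rw [hz, mul_zero, hphi0, abs_zero, mul_zero]
    exact min_le_right _ _

lemma support_bounded_of_finite {Tm : Fin m → Fin n → ℝ → ℝ}
    (h0 : ∀ i j, Tm i j 0 = 0)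
    (hfin : UFinite IsUryson (phiOp Tm)) :
    ∀ i j, ∃ a b : ℝ, ∀ r : ℝ, Tm i j r ≠ 0 → r ∈ Set.Icc a b := by
  obtain ⟨_, Z, hZU, hmaj⟩ := hfin
  intro i j
  by_contra hcon
  push_neg at hcon
  -- the test operator
  set g : ℝ → ℝ := fun r => |r| * (1 + |Z (Pi.single j r) i|) with hg
  set T : (Fin n → ℝ) → Fin m → ℝ := fun x i' => if i' = i then g (x j) else 0 with hTdef
  have hg0 : g 0 = 0 := by simp [hg]
  have hgnn : ∀ r, 0 ≤ g r := by
    intro r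
    apply mul_nonneg (abs_nonneg r)
    positivity
  have hT0 : T 0 = 0 := by
    funext i'
    show (if i' = i then g ((0 : Fin n → ℝ) j) else 0) = 0
    simp [hg0]
  have hTorth : IsOrthAdd T := by
    intro x y hxy
    funext i'
    show (if i' = i then g ((x + y) j) else 0)
      = (if i' = i then g (x j) else 0) + (if i' = i then g (y j) else 0)
    by_cases h : i' = i
    · rw [if_pos h, if_pos h, if_pos h]
      have hj : (x + y) j = x j + y j := rfl
      rw [hj]
      rcases disj_iff.mp hxy j with h'|h'
      · rw [h', zero_add, hg0, zero_add]
      · rw [h', add_zero, hg0, add_zero]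
    · rw [if_neg h, if_neg h, if_neg h, add_zero]
  have hTbdd : IsOrderBounded T := by
    intro a b
    obtain ⟨cZ, dZ, hZb⟩ := hZU.2 (Pi.single j (min (a j) 0)) (Pi.single j (max (b j) 0))
    set K : ℝ := |cZ i| + |dZ i| with hK
    set M' : ℝ := (|a j| + |b j|) * (1 + K) with hM'
    refine ⟨0, fun _ => M', ?_⟩
    intro x hax hxb
    have hxj : a j ≤ x j ∧ x j ≤ b j := ⟨hax j, hxb j⟩
    have hlo : Pi.single j (min (a j) 0) ≤ (Pi.single j (x j) : Fin n → ℝ) := by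
      intro k
      by_cases h : k = j
      · subst h
        rw [Pi.single_eq_same, Pi.single_eq_same]
        exact le_trans (min_le_left _ _) hxj.1
      · rw [Pi.single_eq_of_ne h, Pi.single_eq_of_ne h]
    have hhi : (Pi.single j (x j) : Fin n → ℝ) ≤ Pi.single j (max (b j) 0) := by
      intro k
      by_cases h : k = j
      · subst h
        rw [Pi.single_eq_same, Pi.single_eq_same]
        exact le_trans hxj.2 (le_max_left _ _)
      · rw [Pi.single_eq_of_ne h, Pi.single_eq_of_ne h]
    obtain ⟨hc, hd⟩ := hZb (Pi.single j (x j)) hlo hhi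
    have hZk : |Z (Pi.single j (x j)) i| ≤ K := by
      rw [hK, abs_le]
      have h1 := hc i
      have h2 := hd i
      constructor <;> nlinarith [neg_abs_le (cZ i), le_abs_self (dZ i),
        abs_nonneg (cZ i), abs_nonneg (dZ i)]
    have hxabs : |x j| ≤ |a j| + |b j| := by
      rw [abs_le]
      constructor <;> nlinarith [neg_abs_le (a j), le_abs_self (b j),
        abs_nonneg (a j), abs_nonneg (b j)]
    have hgbd : g (x j) ≤ M' := by
      rw [hg, hM']
      apply mul_le_mul hxabs _ (by positivity) (by positivity)
      linarith
    constructor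
    · intro i'
      show (0:ℝ) ≤ if i' = i then g (x j) else 0
      split
      · exact hgnn _
      · exact le_rfl
    · intro i'
      show (if i' = i then g (x j) else 0) ≤ M'
      split
      · exact hgbd
      · have : (0:ℝ) ≤ M' := le_trans (hgnn (x j)) hgbd
        exact this
  obtain ⟨c, hc, hcb⟩ := hmaj T ⟨hTorth, hTbdd⟩
  obtain ⟨r, hTr, hrIcc⟩ := hcon (-(c+1)) (c+1)
  have hrne : r ≠ 0 := by
    intro h; rw [h] at hTr; exact hTr (h0 i j)
  have hrbig : c + 1 ≤ |r| := by
    rw [Set.mem_Icc] at hrIcc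
    push_neg at hrIcc
    rcases le_or_gt (-(c+1)) r with h|h
    · have := hrIcc h
      rw [abs_of_pos (by linarith)]
      linarith
    · rw [abs_of_neg (by linarith)]
      linarith
  -- evaluate the majorant inequality at Pi.single j r
  have hphiz : phiOp Tm 0 = 0 := phi_zero h0
  have hphir : |phiOp Tm (Pi.single j r) i| = |Tm i j r| := by rw [phi_single h0]
  have hphine : (0:ℝ) < |Tm i j r| := abs_pos.mpr hTr
  -- choose k
  obtain ⟨k, hk⟩ := exists_nat_ge (g r / |Tm i j r|)
  have hkb : g r ≤ (k:ℝ) * |Tm i j r| := by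
    rw [div_le_iff₀ hphine] at hk
    exact hk
  have hmeet : uMeet (uAbs T) (fun y => (k:ℝ) • uAbs (phiOp Tm) y) (Pi.single j r)
      = uAbs T (Pi.single j r) ⊓ ((k:ℝ) • uAbs (phiOp Tm) (Pi.single j r)) :=
    uMeet_single (uAbs_zero hT0) (by rw [uAbs_zero hphiz, smul_zero]) j r
  have hineq := hcb k (Pi.single j r)
  rw [hmeet, uAbs_single hT0, uAbs_single hphiz] at hineq
  have hi := hineq i
  have hlhs : (|T (Pi.single j r)| ⊓ ((k:ℝ) • |phiOp Tm (Pi.single j r)|)) i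
      = min (|T (Pi.single j r) i|) ((k:ℝ) * |phiOp Tm (Pi.single j r) i|) := rfl
  rw [hlhs] at hi
  have hTxi : T (Pi.single j r) i = g r := by
    show (if i = i then g ((Pi.single j r : Fin n → ℝ) j) else 0) = g r
    rw [if_pos rfl, Pi.single_eq_same]
  rw [hTxi, hphir] at hi
  have habs : |g r| = g r := abs_of_nonneg (hgnn r)
  rw [habs, min_eq_left hkb] at hi
  -- hi : g r ≤ (c • Z (Pi.single j r)) i
  have hZi : (c • Z (Pi.single j r)) i = c * Z (Pi.single j r) i := rfl
  rw [hZi] at hi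
  set W := Z (Pi.single j r) i with hW
  have hgr : g r = |r| * (1 + |W|) := rfl
  rw [hgr] at hi
  have hWle : c * W ≤ c * (1 + |W|) := by
    apply mul_le_mul_of_nonneg_left _ (le_of_lt hc)
    nlinarith [le_abs_self W, abs_nonneg W]
  have hfinal : |r| * (1 + |W|) ≤ c * (1 + |W|) := le_trans hi hWle
  have hpos : (0:ℝ) < 1 + |W| := by positivity
  have : |r| ≤ c := le_of_mul_le_mul_right (by linarith [hfinal]) hpos
  linarith

lemma single_decomp (x : Fin n → ℝ) :
    DisjDecomp x (List.ofFn fun j => Pi.single j (x j)) := by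
  constructor
  · rw [List.pairwise_ofFn]
    intro j j' hlt
    apply disj_iff.mpr
    intro k'
    by_cases h1 : k' = j
    · right
      subst h1
      simp [Pi.single_apply, ne_of_lt hlt]
    · left
      simp [Pi.single_apply, h1]
  · rw [List.sum_ofFn]
    exact Finset.univ_sum_single x

lemma uryson_eq_phi {T : (Fin n → ℝ) → Fin m → ℝ} (hT : IsUryson T) :
    T = phiOp (fun i j r => T (Pi.single j r) i) := by
  funext x
  obtain ⟨hp, hs⟩ := single_decomp x
  have h1 : T x = ((List.ofFn fun j => Pi.single j (x j)).map T).sum := by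
    conv_lhs => rw [← hs]
    exact orthAdd_list hT.1 hp
  rw [h1]
  funext i
  rw [List.map_ofFn]
  have h2 : ((List.ofFn (T ∘ fun j => Pi.single j (x j))).sum) i
      = (∑ j, T (Pi.single j (x j))) i :=
    congrFun (List.sum_ofFn (f := T ∘ fun j => Pi.single j (x j))) i
  rw [h2, Finset.sum_apply]
  rfl

lemma uryson_constituent_bdd {T : (Fin n → ℝ) → Fin m → ℝ} (hT : IsUryson T) :
    ∀ (i : Fin m) (j : Fin n) (a b : ℝ), ∃ c : ℝ, ∀ r : ℝ, a ≤ r → r ≤ b →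
      |T (Pi.single j r) i| ≤ c := by
  intro i j a b
  obtain ⟨cZ, dZ, hZb⟩ := hT.2 (Pi.single j (min a 0)) (Pi.single j (max b 0))
  refine ⟨|cZ i| + |dZ i|, fun r hra hrb => ?_⟩
  have hlo : Pi.single j (min a 0) ≤ (Pi.single j r : Fin n → ℝ) := by
    intro k
    by_cases h : k = j
    · subst h
      rw [Pi.single_eq_same, Pi.single_eq_same]
      exact le_trans (min_le_left _ _) hra
    · rw [Pi.single_eq_of_ne h, Pi.single_eq_of_ne h]
  have hhi : (Pi.single j r : Fin n → ℝ) ≤ Pi.single j (max b 0) := by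
    intro k
    by_cases h : k = j
    · subst h
      rw [Pi.single_eq_same, Pi.single_eq_same]
      exact le_trans hrb (le_max_left _ _)
    · rw [Pi.single_eq_of_ne h, Pi.single_eq_of_ne h]
  obtain ⟨hc, hd⟩ := hZb (Pi.single j r) hlo hhi
  have h1 := hc i
  have h2 := hd i
  rw [abs_le]
  constructor <;> nlinarith [neg_abs_le (cZ i), le_abs_self (dZ i),
    abs_nonneg (cZ i), abs_nonneg (dZ i)]

lemma zeta_supp (R : ℝ) : ∀ r : ℝ, zeta R r ≠ 0 → |r| ≤ R := by
  intro r h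
  unfold zeta at h
  by_cases hcond : r ≠ 0 ∧ |r| ≤ R
  · exact hcond.2
  · rw [if_neg hcond] at h
    exact absurd rfl h

lemma R_supp_bound {Tm : Fin m → Fin n → ℝ → ℝ}
    (hsupp : ∀ i j, ∃ a b : ℝ, ∀ r : ℝ, Tm i j r ≠ 0 → r ∈ Set.Icc a b) :
    ∃ R : ℝ, 0 < R ∧ ∀ i j r, Tm i j r ≠ 0 → |r| ≤ R := by
  choose a b hab using hsupp
  refine ⟨1 + ∑ i, ∑ j, (|a i j| + |b i j|), ?_, ?_⟩
  · have : (0:ℝ) ≤ ∑ i, ∑ j, (|a i j| + |b i j|) :=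
      Finset.sum_nonneg (fun i _ => Finset.sum_nonneg (fun j _ => by positivity))
    linarith
  · intro i j r hr
    obtain ⟨h1, h2⟩ := Set.mem_Icc.mp (hab i j r hr)
    have hterm : |a i j| + |b i j| ≤ ∑ j', (|a i j'| + |b i j'|) :=
      Finset.single_le_sum (f := fun j' => |a i j'| + |b i j'|)
        (fun j' _ => by positivity) (Finset.mem_univ j)
    have hterm2 : ∑ j', (|a i j'| + |b i j'|) ≤ ∑ i', ∑ j', (|a i' j'| + |b i' j'|) :=
      Finset.single_le_sum (f := fun i' => ∑ j', (|a i' j'| + |b i' j'|))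
        (fun i' _ => Finset.sum_nonneg (fun j' _ => by positivity)) (Finset.mem_univ i)
    have habs : |r| ≤ |a i j| + |b i j| := by
      rw [abs_le]
      constructor <;> nlinarith [neg_abs_le (a i j), le_abs_self (b i j),
        abs_nonneg (a i j), abs_nonneg (b i j)]
    linarith

end U9



/-- an abstract Uryson operator `T = (T i j) : ℝⁿ → ℝᵐ` is a finite
element of `U(ℝⁿ,ℝᵐ)` iff every constituent function `T i j` has support in a
compact interval; moreover `Φ₁(U(ℝⁿ,ℝᵐ)) = Φ₂(U(ℝⁿ,ℝᵐ))`. -/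
theorem finite_elements_of_U_Rn_Rm (n m : ℕ) :
    (∀ Tm : Fin m → Fin n → ℝ → ℝ,
      (∀ i j, Tm i j 0 = 0) →
      (∀ i j, ∀ a b : ℝ, ∃ c : ℝ, ∀ r : ℝ, a ≤ r → r ≤ b → |Tm i j r| ≤ c) →
      (UFinite IsUryson (fun x : Fin n → ℝ => fun i : Fin m => ∑ j, Tm i j (x j)) ↔
        ∀ i j, ∃ a b : ℝ, ∀ r : ℝ, Tm i j r ≠ 0 → r ∈ Set.Icc a b)) ∧
    (∀ T : (Fin n → ℝ) → (Fin m → ℝ), UFinite IsUryson T →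
      ∃ Z, IsMajorantIn IsUryson Z T ∧ UFinite IsUryson Z) := by
  constructor
  · intro Tm h0 hb
    constructor
    · intro hfin
      exact U9.support_bounded_of_finite h0 hfin
    · intro hsupp
      obtain ⟨R, hR, hsupp'⟩ := U9.R_supp_bound hsupp
      refine ⟨U9.isUryson_phi h0 hb, U9.phiOp (fun _ _ => U9.zeta R),
        U9.isUryson_phi (fun _ _ => U9.zeta_zero R) (fun _ _ => U9.zeta_bdd R), ?_⟩
      intro T hT
      exact U9.majorant_back h0 hR hsupp' T hT
  · intro T hfin
    have hTU := hfin.1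
    have heq : T = U9.phiOp (fun i j r => T (Pi.single j r) i) := U9.uryson_eq_phi hTU
    have h0 : ∀ (i : Fin m) (j : Fin n), (fun i j r => T (Pi.single j r) i) i j 0 = 0 := by
      intro i j
      show T (Pi.single j 0) i = 0
      rw [Pi.single_zero, U9.orthAdd_zero hTU.1]
      rfl
    have hfin' : UFinite IsUryson (U9.phiOp (fun i j r => T (Pi.single j r) i)) :=
      heq ▸ hfin
    have hsupp := U9.support_bounded_of_finite h0 hfin'
    obtain ⟨R, hR, hsupp'⟩ := U9.R_supp_bound hsupp
    have hZU : IsUryson (U9.phiOp (fun (_ : Fin m) (_ : Fin n) => U9.zeta R)) :=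
      U9.isUryson_phi (fun _ _ => U9.zeta_zero R) (fun _ _ => U9.zeta_bdd R)
    refine ⟨U9.phiOp (fun _ _ => U9.zeta R), ⟨hZU, ?_⟩,
      hZU, U9.phiOp (fun _ _ => U9.zeta R), hZU, ?_⟩
    · intro T' hT'
      rw [heq]
      exact U9.majorant_back h0 hR hsupp' T' hT'
    · intro T' hT'
      exact U9.majorant_back (fun _ _ => U9.zeta_zero R) hR
        (fun i j r h => U9.zeta_supp R r h) T' hT'
end

section
/- Let E be an atomic vector lattice and φ a finite element of the vector lattice U(E,ℝ) of abstract Uryson functionals on E. Then the set of mutually disjoint atoms e of E with φ(e) ≠ 0 is finite. -/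
/-- An atom of a vector lattice. -/
def IsAtomElt {E : Type*} [Lattice E] [AddCommGroup E]
    [CovariantClass E E (· + ·) (· ≤ ·)] [Module ℝ E] (u : E) : Prop :=
  u ≠ 0 ∧ ∀ x y : E, 0 ≤ x → x ≤ |u| → 0 ≤ y → y ≤ |u| → x ⊓ y = 0 → x = 0 ∨ y = 0

section AuxVL
set_option linter.unusedSectionVars false

variable {E : Type*} [Lattice E] [AddCommGroup E]
  [CovariantClass E E (· + ·) (· ≤ ·)] [Module ℝ E]

private lemma vl_abs_eq_zero {a : E} (h : |a| = 0) : a = 0 :=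
  le_antisymm ((le_abs_self a).trans h.le) (neg_nonpos.mp ((neg_le_abs a).trans h.le))

private lemma vl_inf_add {a b c : E} (ha : 0 ≤ a) (hb : 0 ≤ b) (hc : 0 ≤ c) :
    a ⊓ (b + c) ≤ a ⊓ b + a ⊓ c := by
  have h1 : a ⊓ (b + c) ≤ a ⊓ b + c := by
    calc a ⊓ (b + c) ≤ (a + c) ⊓ (b + c) :=
          inf_le_inf_right _ (le_add_of_nonneg_right hc)
      _ = a ⊓ b + c := (inf_add a b c).symm
  have h2 : a ⊓ (b + c) ≤ a ⊓ b + a :=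
    le_trans inf_le_left (le_add_of_nonneg_left (le_inf ha hb))
  calc a ⊓ (b + c) ≤ (a ⊓ b + c) ⊓ (a ⊓ b + a) := le_inf h1 h2
    _ = a ⊓ b + c ⊓ a := (add_inf c a (a ⊓ b)).symm
    _ = a ⊓ b + a ⊓ c := by rw [inf_comm c a]

private lemma vl_disj_abs_add {a b : E} (h : |a| ⊓ |b| = 0) : |a + b| = |a| + |b| := by
  have key : ∀ x y : E, |x| ⊓ |y| = 0 → |x| ≤ |x + y| := by
    intro x y hxy
    have h1 : |x| ≤ |x + y| + |y| := by
      calc |x| = |x + y + -y| := by rw [add_neg_cancel_right]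
        _ ≤ |x + y| + |(-y)| := abs_add_le _ _
        _ = |x + y| + |y| := by rw [abs_neg]
    calc |x| = |x| ⊓ (|x + y| + |y|) := (inf_eq_left.mpr h1).symm
      _ ≤ |x| ⊓ |x + y| + |x| ⊓ |y| :=
          vl_inf_add (abs_nonneg x) (abs_nonneg _) (abs_nonneg y)
      _ = |x| ⊓ |x + y| + 0 := by rw [hxy]
      _ ≤ |x + y| := by rw [add_zero]; exact inf_le_right
  have hab : |a| ⊔ |b| ≤ |a + b| := by
    refine sup_le (key a b h) ?_
    rw [add_comm]
    exact key b a (by rwa [inf_comm] at h)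
  refine le_antisymm (abs_add_le a b) ?_
  calc |a| + |b| = |a| ⊓ |b| + (|a| ⊔ |b|) := (inf_add_sup _ _).symm
    _ = 0 + (|a| ⊔ |b|) := by rw [h]
    _ = |a| ⊔ |b| := zero_add _
    _ ≤ |a + b| := hab

private lemma vl_frag_abs_eq {z x : E} (h : IsFragment z x) : |x| = |z| + |x - z| := by
  have h2 := vl_disj_abs_add h
  rwa [show z + (x - z) = x from by abel] at h2

private lemma vl_frag_abs_le {z x : E} (h : IsFragment z x) : |z| ≤ |x| := by
  rw [vl_frag_abs_eq h]
  exact le_add_of_nonneg_right (abs_nonneg _)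

private lemma vl_sum_abs_nonneg : ∀ l : List E, 0 ≤ (l.map abs).sum
  | [] => by simp
  | b :: t => by
    simp only [List.map_cons, List.sum_cons]
    exact add_nonneg (abs_nonneg b) (vl_sum_abs_nonneg t)

private lemma vl_disj_list {a : E} (ha : 0 ≤ a) :
    ∀ l : List E, (∀ b ∈ l, a ⊓ |b| = 0) → a ⊓ (l.map abs).sum = 0
  | [], _ => by
    simp only [List.map_nil, List.sum_nil]
    exact inf_eq_right.mpr ha
  | b :: t, h => by
    simp only [List.map_cons, List.sum_cons]
    refine le_antisymm ?_ (le_inf ha (add_nonneg (abs_nonneg b) (vl_sum_abs_nonneg t)))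
    calc a ⊓ (|b| + (t.map abs).sum)
        ≤ a ⊓ |b| + a ⊓ (t.map abs).sum :=
          vl_inf_add ha (abs_nonneg b) (vl_sum_abs_nonneg t)
      _ = 0 := by
          rw [h b List.mem_cons_self, vl_disj_list ha t
            (fun b' hb' => h b' (List.mem_cons_of_mem b hb')), add_zero]

private lemma vl_abs_list_sum : ∀ l : List E,
    l.Pairwise (fun a b => |a| ⊓ |b| = 0) → |l.sum| = (l.map abs).sum
  | [], _ => by simp
  | b :: t, hp => by
    obtain ⟨h1, h2⟩ := List.pairwise_cons.mp hp
    have ht := vl_abs_list_sum t h2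
    have hd : |b| ⊓ |t.sum| = 0 := by
      rw [ht]; exact vl_disj_list (abs_nonneg b) t h1
    simp only [List.sum_cons, List.map_cons]
    rw [vl_disj_abs_add hd, ht]

private lemma vl_list_all_zero : ∀ l : List E, (l.map abs).sum = 0 → ∀ a ∈ l, a = 0
  | [], _, a, ha => absurd ha List.not_mem_nil
  | b :: t, h, a, ha => by
    simp only [List.map_cons, List.sum_cons] at h
    have h1 : |b| = 0 := by
      refine le_antisymm ?_ (abs_nonneg b)
      calc |b| ≤ |b| + (t.map abs).sum := le_add_of_nonneg_right (vl_sum_abs_nonneg t)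
        _ = 0 := h
    have h2 : (t.map abs).sum = 0 := by
      refine le_antisymm ?_ (vl_sum_abs_nonneg t)
      calc (t.map abs).sum ≤ |b| + (t.map abs).sum :=
            le_add_of_nonneg_left (abs_nonneg b)
        _ = 0 := h
    rcases List.mem_cons.mp ha with rfl | ha'
    · exact vl_abs_eq_zero h1
    · exact vl_list_all_zero t h2 a ha'

private lemma vl_sum_zero {l : List E} (hp : l.Pairwise (fun a b => |a| ⊓ |b| = 0))
    (hs : l.sum = 0) : ∀ a ∈ l, a = 0 := by
  have h0 : (l.map abs).sum = 0 := by
    rw [← vl_abs_list_sum l hp, hs, abs_zero]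
  exact vl_list_all_zero l h0

private lemma atom_frag {u z : E} (hu : IsAtomElt u) (h : IsFragment z u) :
    z = 0 ∨ z = u := by
  have he : |u| = |z| + |u - z| := vl_frag_abs_eq h
  have h1 : |z| ≤ |u| := by rw [he]; exact le_add_of_nonneg_right (abs_nonneg _)
  have h2 : |u - z| ≤ |u| := by rw [he]; exact le_add_of_nonneg_left (abs_nonneg _)
  rcases hu.2 |z| |u - z| (abs_nonneg _) h1 (abs_nonneg _) h2 h with h3 | h3
  · exact Or.inl (vl_abs_eq_zero h3)
  · right
    have h4 : u - z = 0 := vl_abs_eq_zero h3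
    have := sub_eq_zero.mp h4
    exact this.symm

private lemma atom_decomp_sum {u : E} (hu : IsAtomElt u) (f : E → ℝ) (hf : f 0 = 0) :
    ∀ l : List E, l.Pairwise (fun a b => |a| ⊓ |b| = 0) → l.sum = u →
      (l.map f).sum = f u
  | [], _, hs => by
    simp only [List.sum_nil] at hs
    exact absurd hs.symm hu.1
  | b :: t, hp, hs => by
    obtain ⟨h1, h2⟩ := List.pairwise_cons.mp hp
    have hdt : |b| ⊓ |t.sum| = 0 := by
      rw [vl_abs_list_sum t h2]; exact vl_disj_list (abs_nonneg b) t h1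
    simp only [List.sum_cons] at hs
    have hfrag : IsFragment b u := by
      show |b| ⊓ |u - b| = 0
      have : u - b = t.sum := by rw [← hs]; abel
      rw [this]; exact hdt
    rcases atom_frag hu hfrag with hb | hb
    · subst hb
      simp only [List.map_cons, List.sum_cons, hf, zero_add]
      exact atom_decomp_sum hu f hf t h2 (by rwa [zero_add] at hs)
    · subst hb
      have hts : t.sum = 0 := by
        have := hs
        nth_rewrite 2 [← add_zero b] at this
        exact add_left_cancel this
      have hall := vl_sum_zero h2 hts
      simp only [List.map_cons, List.sum_cons]
      have hz : (t.map f).sum = 0 := by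
        refine List.sum_eq_zero ?_
        intro x hx
        obtain ⟨a, ha, rfl⟩ := List.mem_map.mp hx
        rw [hall a ha, hf]
      rw [hz, add_zero]

private lemma decompSet_atom {u : E} (hu : IsAtomElt u) (f : E → ℝ) (hf : f 0 = 0) :
    {s : ℝ | ∃ l : List E, DisjDecomp u l ∧ s = (l.map f).sum} = {f u} := by
  ext s
  simp only [Set.mem_setOf_eq, Set.mem_singleton_iff]
  constructor
  · rintro ⟨l, ⟨hp, hsum⟩, rfl⟩
    exact atom_decomp_sum hu f hf l hp hsum
  · rintro rfl
    exact ⟨[u], ⟨List.pairwise_singleton _ _, by simp⟩, by simp⟩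

private lemma decompSet_zero (f : E → ℝ) (hf : f 0 = 0) :
    {s : ℝ | ∃ l : List E, DisjDecomp (0 : E) l ∧ s = (l.map f).sum} = {0} := by
  ext s
  simp only [Set.mem_setOf_eq, Set.mem_singleton_iff]
  constructor
  · rintro ⟨l, ⟨hp, hsum⟩, rfl⟩
    refine List.sum_eq_zero ?_
    intro x hx
    obtain ⟨a, ha, rfl⟩ := List.mem_map.mp hx
    rw [vl_sum_zero hp hsum a ha, hf]
  · rintro rfl
    exact ⟨[], ⟨List.Pairwise.nil, by simp⟩, by simp⟩

private lemma orth_zero {T : E → ℝ} (h : IsOrthAdd T) : T 0 = 0 := by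
  have h0 : |(0 : E)| ⊓ |(0 : E)| = 0 := by simp
  have := h 0 0 h0
  rw [add_zero] at this
  linarith

private lemma uAbs_atom {T : E → ℝ} (hT : IsOrthAdd T) {u : E} (hu : IsAtomElt u) :
    uAbs T u = |T u| := by
  unfold uAbs
  rw [decompSet_atom hu (fun a => |T a|) (by show |T 0| = (0:ℝ); rw [orth_zero hT, abs_zero]), csSup_singleton]

private lemma uAbs_zero {T : E → ℝ} (hT : IsOrthAdd T) : uAbs T 0 = 0 := by
  unfold uAbs
  rw [decompSet_zero (fun a => |T a|) (by show |T 0| = (0:ℝ); rw [orth_zero hT, abs_zero]), csSup_singleton]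

private lemma uMeet_atom {T φ : E → ℝ} (hT : IsOrthAdd T) (hφ : IsOrthAdd φ)
    {u : E} (hu : IsAtomElt u) (n : ℕ) :
    uMeet (uAbs T) (fun y => (n : ℝ) • uAbs φ y) u = |T u| ⊓ ((n : ℝ) * |φ u|) := by
  have hf0 : uAbs T 0 ⊓ (n : ℝ) • uAbs φ 0 = 0 := by
    rw [uAbs_zero hT, uAbs_zero hφ, smul_zero]
    simp
  show sInf {r : ℝ | ∃ l : List E, DisjDecomp u l ∧
      r = (l.map fun a => uAbs T a ⊓ (n : ℝ) • uAbs φ a).sum} = _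
  rw [decompSet_atom hu (fun a => uAbs T a ⊓ (n : ℝ) • uAbs φ a) hf0, csInf_singleton,
    uAbs_atom hT hu, uAbs_atom hφ hu, smul_eq_mul]

private lemma key_bound {φ Z : E → ℝ} (hφ : IsUryson φ)
    (hmaj : IsMajorantIn IsUryson Z φ) {T : E → ℝ} (hT : IsUryson T) :
    ∃ c : ℝ, 0 < c ∧ ∀ u : E, IsAtomElt u → φ u ≠ 0 → |T u| ≤ c * Z u := by
  obtain ⟨hZU, hdom⟩ := hmaj
  obtain ⟨c, hc, hcle⟩ := hdom T hT
  refine ⟨c, hc, fun u hu hphi => ?_⟩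
  have habs : 0 < |φ u| := abs_pos.mpr hphi
  obtain ⟨n, hn⟩ := exists_nat_ge (|T u| / |φ u|)
  have h1 : |T u| ≤ (n : ℝ) * |φ u| := by
    rw [div_le_iff₀ habs] at hn
    linarith
  have h2 := hcle n u
  rw [uMeet_atom hT.1 hφ.1 hu n, inf_eq_left.mpr h1, smul_eq_mul] at h2
  exact h2

end AuxVL
section AuxT
set_option linter.unusedSectionVars false

variable {E : Type*} [Lattice E] [AddCommGroup E]
  [CovariantClass E E (· + ·) (· ≤ ·)] [Module ℝ E]

private lemma frag_add {u x y : E} (hf : IsFragment u x) (hxy : |x| ⊓ |y| = 0) :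
    IsFragment u (x + y) := by
  have hux : |u| ≤ |x| := vl_frag_abs_le hf
  have hf' : |u| ⊓ |x - u| = 0 := hf
  have h1 : |x + y - u| ≤ |x - u| + |y| := by
    calc |x + y - u| = |(x - u) + y| := by rw [show x + y - u = (x - u) + y from by abel]
      _ ≤ |x - u| + |y| := abs_add_le _ _
  show |u| ⊓ |x + y - u| = 0
  refine le_antisymm ?_ (le_inf (abs_nonneg _) (abs_nonneg _))
  calc |u| ⊓ |x + y - u| ≤ |u| ⊓ (|x - u| + |y|) := inf_le_inf_left _ h1
    _ ≤ |u| ⊓ |x - u| + |u| ⊓ |y| :=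
        vl_inf_add (abs_nonneg _) (abs_nonneg _) (abs_nonneg _)
    _ ≤ 0 + |x| ⊓ |y| := add_le_add (le_of_eq hf') (inf_le_inf_right _ hux)
    _ = 0 := by rw [hxy, zero_add]

private lemma frag_not_both {u x y : E} (hu : u ≠ 0) (hx : IsFragment u x)
    (hy : IsFragment u y) (hxy : |x| ⊓ |y| = 0) : False := by
  have h1 : |u| ≤ |x| ⊓ |y| := le_inf (vl_frag_abs_le hx) (vl_frag_abs_le hy)
  rw [hxy] at h1
  exact hu (vl_abs_eq_zero (le_antisymm h1 (abs_nonneg u)))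

private lemma frag_split {u x y : E} (hu : IsAtomElt u) (hxy : |x| ⊓ |y| = 0)
    (hf : IsFragment u (x + y)) : IsFragment u x ∨ IsFragment u y := by
  have hf' : |u| ⊓ |x + y - u| = 0 := hf
  have hd : (|u| ⊓ |x|) ⊓ (|u| ⊓ |y|) = 0 := by
    refine le_antisymm ?_ (le_inf (le_inf (abs_nonneg _) (abs_nonneg _))
      (le_inf (abs_nonneg _) (abs_nonneg _)))
    calc (|u| ⊓ |x|) ⊓ (|u| ⊓ |y|) ≤ |x| ⊓ |y| := inf_le_inf inf_le_right inf_le_right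
      _ = 0 := hxy
  rcases hu.2 (|u| ⊓ |x|) (|u| ⊓ |y|)
      (le_inf (abs_nonneg _) (abs_nonneg _)) inf_le_left
      (le_inf (abs_nonneg _) (abs_nonneg _)) inf_le_left
      hd with h | h
  · right
    show |u| ⊓ |y - u| = 0
    have h1 : |y - u| ≤ |x + y - u| + |x| := by
      calc |y - u| = |(x + y - u) + -x| := by rw [show y - u = (x + y - u) + -x from by abel]
        _ ≤ |x + y - u| + |(-x)| := abs_add_le _ _
        _ = |x + y - u| + |x| := by rw [abs_neg]
    refine le_antisymm ?_ (le_inf (abs_nonneg _) (abs_nonneg _))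
    calc |u| ⊓ |y - u| ≤ |u| ⊓ (|x + y - u| + |x|) := inf_le_inf_left _ h1
      _ ≤ |u| ⊓ |x + y - u| + |u| ⊓ |x| :=
          vl_inf_add (abs_nonneg _) (abs_nonneg _) (abs_nonneg _)
      _ = 0 := by rw [hf', h, add_zero]
  · left
    show |u| ⊓ |x - u| = 0
    have h1 : |x - u| ≤ |x + y - u| + |y| := by
      calc |x - u| = |(x + y - u) + -y| := by rw [show x - u = (x + y - u) + -y from by abel]
        _ ≤ |x + y - u| + |(-y)| := abs_add_le _ _
        _ = |x + y - u| + |y| := by rw [abs_neg]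
    refine le_antisymm ?_ (le_inf (abs_nonneg _) (abs_nonneg _))
    calc |u| ⊓ |x - u| ≤ |u| ⊓ (|x + y - u| + |y|) := inf_le_inf_left _ h1
      _ ≤ |u| ⊓ |x + y - u| + |u| ⊓ |y| :=
          vl_inf_add (abs_nonneg _) (abs_nonneg _) (abs_nonneg _)
      _ = 0 := by rw [hf', h, add_zero]

open Classical in
private noncomputable def atomT (v : ℕ → E) (a : ℕ → ℝ) : E → ℝ :=
  fun x => ∑' j, if IsFragment (v j) x then a j else 0

open Classical in
private lemma atomT_spec (v : ℕ → E) (hv : ∀ j, IsAtomElt (v j))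
    (hd : ∀ i j, i ≠ j → |v i| ⊓ |v j| = 0) (a : ℕ → ℝ) (ha : ∀ j, 0 ≤ a j)
    (HS : ∀ w : E, Summable (fun j => if |v j| ≤ w then a j else 0)) :
    IsUryson (atomT v a) ∧ ∀ j, atomT v a (v j) = a j := by
  have hg_nonneg : ∀ j (x : E), 0 ≤ (if IsFragment (v j) x then a j else 0) := by
    intro j x
    split
    · exact ha j
    · exact le_refl 0
  have hg_le : ∀ (x : E) j,
      (if IsFragment (v j) x then a j else 0) ≤ (if |v j| ≤ |x| then a j else 0) := by
    intro x j
    by_cases h : IsFragment (v j) x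
    · rw [if_pos h, if_pos (vl_frag_abs_le h)]
    · rw [if_neg h]
      split
      · exact ha j
      · exact le_refl 0
  have hsum : ∀ x : E, Summable (fun j => if IsFragment (v j) x then a j else 0) :=
    fun x => Summable.of_nonneg_of_le (fun j => hg_nonneg j x) (hg_le x) (HS |x|)
  refine ⟨⟨?_, ?_⟩, ?_⟩
  · -- orthogonally additive
    intro x y hxy
    have hpt : ∀ j, (if IsFragment (v j) (x + y) then a j else 0) =
        (if IsFragment (v j) x then a j else 0) +
        (if IsFragment (v j) y then a j else 0) := by
      intro j
      by_cases hx : IsFragment (v j) x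
      · have hy : ¬ IsFragment (v j) y := fun hy => frag_not_both (hv j).1 hx hy hxy
        rw [if_pos hx, if_neg hy, if_pos (frag_add hx hxy), add_zero]
      · by_cases hy : IsFragment (v j) y
        · have hfr : IsFragment (v j) (x + y) := by
            rw [add_comm]
            exact frag_add hy (by rwa [inf_comm] at hxy)
          rw [if_neg hx, if_pos hy, if_pos hfr, zero_add]
        · have hno : ¬ IsFragment (v j) (x + y) := by
            intro h
            rcases frag_split (hv j) hxy h with h' | h'
            · exact hx h'
            · exact hy h'
          rw [if_neg hx, if_neg hy, if_neg hno, add_zero]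
    show (∑' j, if IsFragment (v j) (x + y) then a j else 0) = _
    rw [tsum_congr hpt]
    exact Summable.tsum_add (hsum x) (hsum y)
  · -- order bounded
    intro p q
    refine ⟨0, ∑' j, if |v j| ≤ |p| ⊔ |q| then a j else 0, fun x hpx hxq => ⟨?_, ?_⟩⟩
    · exact tsum_nonneg (fun j => hg_nonneg j x)
    · have hxw : |x| ≤ |p| ⊔ |q| := by
        have h1 : x ≤ |p| ⊔ |q| := le_trans (hxq.trans (le_abs_self q)) le_sup_right
        have h2a : -x ≤ -p := neg_le_neg_iff.mpr hpx
        have h2 : -x ≤ |p| ⊔ |q| := le_trans (h2a.trans (neg_le_abs p)) le_sup_left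
        exact abs_le'.mpr ⟨h1, h2⟩
      refine Summable.tsum_le_tsum (fun j => ?_) (hsum x) (HS _)
      refine le_trans (hg_le x j) ?_
      by_cases h : |v j| ≤ |x|
      · rw [if_pos h, if_pos (h.trans hxw)]
      · rw [if_neg h]
        split
        · exact ha j
        · exact le_refl 0
  · -- values at atoms
    intro j
    have hpt : ∀ i, (if IsFragment (v i) (v j) then a i else 0) =
        (if i = j then a j else 0) := by
      intro i
      by_cases h : i = j
      · subst h
        have hfr : IsFragment (v i) (v i) := by
          show |v i| ⊓ |v i - v i| = 0
          rw [sub_self, abs_zero]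
          exact inf_eq_right.mpr (abs_nonneg _)
        rw [if_pos hfr, if_pos rfl]
      · have hno : ¬ IsFragment (v i) (v j) := by
          intro hfr
          have hdisj : |v j| ⊓ |(-(v i))| = 0 := by
            rw [abs_neg]; exact hd j i (Ne.symm h)
          have habs : |v j - v i| = |v j| + |v i| := by
            rw [sub_eq_add_neg, vl_disj_abs_add hdisj, abs_neg]
          have hle : |v i| ≤ |v j - v i| := by
            rw [habs]; exact le_add_of_nonneg_left (abs_nonneg _)
          have hz : |v i| = 0 := by
            have hfr' : |v i| ⊓ |v j - v i| = 0 := hfr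
            rw [← hfr']
            exact (inf_eq_left.mpr hle).symm
          exact (hv i).1 (vl_abs_eq_zero hz)
        rw [if_neg hno, if_neg h]
    show (∑' i, if IsFragment (v i) (v j) then a i else 0) = a j
    rw [tsum_congr hpt]
    exact tsum_ite_eq j (fun _ => a j)

private lemma finset_abs_sum_nonneg (v : ℕ → E) (F : Finset ℕ) :
    0 ≤ ∑ j ∈ F, |v j| :=
  by
  induction F using Finset.cons_induction with
  | empty => simp
  | cons j F hj ih =>
    rw [Finset.sum_cons]; exact add_nonneg (abs_nonneg _) ih

private lemma finset_disj_sum {a : E} (ha : 0 ≤ a) (v : ℕ → E) (F : Finset ℕ)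
    (h : ∀ j ∈ F, a ⊓ |v j| = 0) : a ⊓ (∑ j ∈ F, |v j|) = 0 := by
  induction F using Finset.cons_induction with
  | empty => simpa using inf_eq_right.mpr ha
  | cons j F hj ih =>
    rw [Finset.sum_cons]
    refine le_antisymm ?_ (le_inf ha (add_nonneg (abs_nonneg _) (finset_abs_sum_nonneg v F)))
    calc a ⊓ (|v j| + ∑ i ∈ F, |v i|)
        ≤ a ⊓ |v j| + a ⊓ (∑ i ∈ F, |v i|) :=
          vl_inf_add ha (abs_nonneg _) (finset_abs_sum_nonneg v F)
      _ = 0 := by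
          rw [h j (Finset.mem_cons_self j F), ih (fun i hi => h i (Finset.mem_cons_of_mem hi)),
            add_zero]

private lemma finset_abs_sum (v : ℕ → E) (hd : ∀ i j, i ≠ j → |v i| ⊓ |v j| = 0)
    (F : Finset ℕ) : |∑ j ∈ F, v j| = ∑ j ∈ F, |v j| := by
  induction F using Finset.cons_induction with
  | empty => simp
  | cons j F hj ih =>
    rw [Finset.sum_cons, Finset.sum_cons, ← ih]
    refine vl_disj_abs_add ?_
    rw [ih]
    exact finset_disj_sum (abs_nonneg _) v F (fun i hi => hd j i (fun he => hj (he ▸ hi)))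

private lemma finset_Z_sum {Z : E → ℝ} (hZ : IsOrthAdd Z) (v : ℕ → E)
    (hd : ∀ i j, i ≠ j → |v i| ⊓ |v j| = 0) (F : Finset ℕ) :
    Z (∑ j ∈ F, v j) = ∑ j ∈ F, Z (v j) := by
  induction F using Finset.cons_induction with
  | empty => simpa using orth_zero hZ
  | cons j F hj ih =>
    rw [Finset.sum_cons, Finset.sum_cons, ← ih]
    refine hZ _ _ ?_
    rw [finset_abs_sum v hd]
    exact finset_disj_sum (abs_nonneg _) v F (fun i hi => hd j i (fun he => hj (he ▸ hi)))

private lemma finset_sum_abs_le {w : E} (hw : 0 ≤ w) (v : ℕ → E)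
    (hd : ∀ i j, i ≠ j → |v i| ⊓ |v j| = 0) (F : Finset ℕ)
    (h : ∀ j ∈ F, |v j| ≤ w) : (∑ j ∈ F, |v j|) ≤ w := by
  induction F using Finset.cons_induction with
  | empty => simpa using hw
  | cons j F hj ih =>
    rw [Finset.sum_cons]
    have hdisj : |v j| ⊓ (∑ i ∈ F, |v i|) = 0 :=
      finset_disj_sum (abs_nonneg _) v F (fun i hi => hd j i (fun he => hj (he ▸ hi)))
    calc |v j| + ∑ i ∈ F, |v i|
        = |v j| ⊓ (∑ i ∈ F, |v i|) + (|v j| ⊔ ∑ i ∈ F, |v i|) := (inf_add_sup _ _).symm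
      _ = |v j| ⊔ ∑ i ∈ F, |v i| := by rw [hdisj, zero_add]
      _ ≤ w := sup_le (h j (Finset.mem_cons_self j F))
          (ih (fun i hi => h i (Finset.mem_cons_of_mem hi)))

open Classical in
private lemma main_contra {φ Z : E → ℝ} (hφ : IsUryson φ)
    (hmaj : IsMajorantIn IsUryson Z φ)
    (v : ℕ → E) (hv : ∀ j, IsAtomElt (v j)) (hvφ : ∀ j, φ (v j) ≠ 0)
    (hd : ∀ i j, i ≠ j → |v i| ⊓ |v j| = 0)
    (HS : ∀ w : E, Summable (fun j => if |v j| ≤ w then ((j : ℝ) + 1) * Z (v j) else 0)) :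
    False := by
  have hZpos : ∀ j, 0 < Z (v j) := by
    obtain ⟨c0, hc0, hb0⟩ := key_bound hφ hmaj hφ
    intro j
    have h := hb0 (v j) (hv j) (hvφ j)
    have habs : 0 < |φ (v j)| := abs_pos.mpr (hvφ j)
    nlinarith
  have ha : ∀ j : ℕ, 0 ≤ ((j : ℝ) + 1) * Z (v j) := by
    intro j
    exact mul_nonneg (by positivity) (hZpos j).le
  obtain ⟨hTU, hTval⟩ := atomT_spec v hv hd (fun j => ((j : ℝ) + 1) * Z (v j)) ha HS
  obtain ⟨c, hc, hb⟩ := key_bound hφ hmaj hTU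
  obtain ⟨n, hn⟩ := exists_nat_gt c
  have h1 := hb (v n) (hv n) (hvφ n)
  rw [hTval n, abs_of_nonneg (ha n)] at h1
  nlinarith [hZpos n]

end AuxT
/-- if `E` is atomic and `φ` is a finite element of `U(E,ℝ)`, then any
collection of mutually disjoint atoms on which `φ` does not vanish is finite. -/
theorem finite_element_vanishes_off_finitely_many_atoms
    {E : Type*} [Lattice E] [AddCommGroup E]
    [CovariantClass E E (· + ·) (· ≤ ·)] [Module ℝ E]
    (hatomic : ∀ x : E, 0 < x → ∃ u : E, IsAtomElt u ∧ 0 < u ∧ u ≤ x)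
    (φ : E → ℝ) (hφ : UFinite IsUryson φ)
    (A : Set E)
    (hAatoms : ∀ u ∈ A, IsAtomElt u ∧ φ u ≠ 0)
    (hAdisj : ∀ u ∈ A, ∀ v ∈ A, u ≠ v → |u| ⊓ |v| = 0) :
    A.Finite := by
  classical
  by_contra hfin
  have hinf : A.Infinite := hfin
  obtain ⟨hφU, Z, hmaj⟩ := hφ
  set emb := Set.Infinite.natEmbedding A hinf with hemb
  set u : ℕ → E := fun k => (emb k : E) with hudef
  have huinj : Function.Injective u := fun k k' h =>
    emb.injective (Subtype.coe_injective h)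
  have huA : ∀ k, u k ∈ A := fun k => (emb k).2
  have hatom : ∀ k, IsAtomElt (u k) := fun k => (hAatoms _ (huA k)).1
  have hphi : ∀ k, φ (u k) ≠ 0 := fun k => (hAatoms _ (huA k)).2
  have hdisj : ∀ k k', k ≠ k' → |u k| ⊓ |u k'| = 0 := fun k k' h =>
    hAdisj _ (huA k) _ (huA k') (fun he => h (huinj he))
  have hZpos : ∀ k, 0 < Z (u k) := by
    obtain ⟨c0, hc0, hb0⟩ := key_bound hφU hmaj hφU
    intro k
    have h := hb0 (u k) (hatom k) (hphi k)
    have habs : 0 < |φ (u k)| := abs_pos.mpr (hphi k)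
    nlinarith
  have hZU : IsUryson Z := hmaj.1
  by_cases hcase : ∃ δ : ℝ, 0 < δ ∧ {k : ℕ | δ ≤ Z (u k)}.Infinite
  · -- Case II : the values of Z on the atoms are bounded below along a subsequence
    obtain ⟨δ, hδ, hKinf⟩ := hcase
    set emb2 := Set.Infinite.natEmbedding _ hKinf with hemb2
    set f : ℕ → ℕ := fun j => (emb2 j : ℕ) with hfdef
    have hfinj : Function.Injective f := fun j j' h =>
      emb2.injective (Subtype.coe_injective h)
    have hfδ : ∀ j, δ ≤ Z (u (f j)) := fun j => (emb2 j).2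
    set v : ℕ → E := fun j => u (f j) with hvdef
    have hdisj' : ∀ i j : ℕ, i ≠ j → |v i| ⊓ |v j| = 0 :=
      fun i j h => hdisj _ _ (fun he => h (hfinj he))
    refine main_contra hφU hmaj v (fun j => hatom _) (fun j => hphi _) hdisj' ?_
    intro w
    by_cases hsupp : ∃ j0 : ℕ, |v j0| ≤ w
    · obtain ⟨j0, hj0⟩ := hsupp
      have hw : 0 ≤ w := le_trans (abs_nonneg _) hj0
      have hSfin : {j : ℕ | |v j| ≤ w}.Finite := by
        rw [← Set.not_infinite]
        intro hSinf
        obtain ⟨cw, dw, hbd⟩ := hZU.2 (-w) w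
        obtain ⟨N, hN⟩ := exists_nat_gt (dw / δ)
        obtain ⟨t, hts, htfin, htcard⟩ := hSinf.exists_subset_ncard_eq N
        set Ft := htfin.toFinset with hFt
        have hmemFt : ∀ j ∈ Ft, |v j| ≤ w := fun j hj => hts (htfin.mem_toFinset.mp hj)
        have hsle : |∑ j ∈ Ft, v j| ≤ w := by
          rw [finset_abs_sum v hdisj' Ft]
          exact finset_sum_abs_le hw v hdisj' Ft hmemFt
        have hge : -w ≤ ∑ j ∈ Ft, v j :=
          neg_le.mp ((neg_le_abs (∑ j ∈ Ft, v j)).trans hsle)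
        have hle2 : (∑ j ∈ Ft, v j) ≤ w := le_trans (le_abs_self _) hsle
        have hub := (hbd _ hge hle2).2
        have hZsum : Z (∑ j ∈ Ft, v j) = ∑ j ∈ Ft, Z (v j) :=
          finset_Z_sum hZU.1 v hdisj' Ft
        have hcard : Ft.card = N := by
          rw [hFt, ← Set.ncard_eq_toFinset_card t htfin, htcard]
        have hlow : (N : ℝ) * δ ≤ ∑ j ∈ Ft, Z (v j) := by
          calc (N : ℝ) * δ = ∑ _j ∈ Ft, δ := by
                rw [Finset.sum_const, hcard, nsmul_eq_mul]
            _ ≤ ∑ j ∈ Ft, Z (v j) := Finset.sum_le_sum (fun j _ => hfδ j)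
        rw [hZsum] at hub
        have hdN : dw < (N : ℝ) * δ := by rwa [div_lt_iff₀ hδ] at hN
        linarith
      refine summable_of_ne_finset_zero (s := hSfin.toFinset) ?_
      intro j hj
      exact if_neg (fun h => hj (hSfin.mem_toFinset.mpr h))
    · have heq : (fun j : ℕ => if |v j| ≤ w then ((j : ℝ) + 1) * Z (v j) else 0)
          = fun _ => (0 : ℝ) :=
        funext fun j => if_neg (fun h => hsupp ⟨j, h⟩)
      rw [heq]
      exact summable_zero
  · -- Case I : Z gets arbitrarily small on the atoms
    have hIinf : ∀ δ : ℝ, 0 < δ → {k : ℕ | Z (u k) < δ}.Infinite := by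
      intro δ hδ
      have hfinK : {k : ℕ | δ ≤ Z (u k)}.Finite := by
        rw [← Set.not_infinite]
        exact fun h => hcase ⟨δ, hδ, h⟩
      have hcompl : {k : ℕ | Z (u k) < δ} = {k : ℕ | δ ≤ Z (u k)}ᶜ := by
        ext k; simp [not_le]
      rw [hcompl]
      exact hfinK.infinite_compl
    have hstep : ∀ j m : ℕ, ∃ k, m < k ∧ Z (u k) < (1/2 : ℝ) ^ j / ((j : ℝ) + 1) := by
      intro j m
      have hδ : (0 : ℝ) < (1/2 : ℝ) ^ j / ((j : ℝ) + 1) := by positivity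
      have hi := hIinf _ hδ
      by_contra hcon
      push_neg at hcon
      refine hi (Set.Finite.subset (Set.finite_Iic m) ?_)
      intro k hk
      by_contra hk2
      simp only [Set.mem_Iic, not_le] at hk2
      exact absurd (hcon k hk2) (not_le.mpr hk)
    choose g hg1 hg2 using hstep
    set f : ℕ → ℕ := fun j => Nat.rec (g 0 0) (fun j' prev => g (j' + 1) prev) j with hfdef
    have hfs : ∀ j : ℕ, f (j + 1) = g (j + 1) (f j) := fun j => rfl
    have hmono : StrictMono f := strictMono_nat_of_lt_succ (fun j => by
      rw [hfs]; exact hg1 _ _)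
    have hfZ : ∀ j : ℕ, Z (u (f j)) < (1/2 : ℝ) ^ j / ((j : ℝ) + 1) := by
      intro j
      cases j with
      | zero => exact hg2 0 0
      | succ j' => rw [hfs]; exact hg2 _ _
    set v : ℕ → E := fun j => u (f j) with hvdef
    refine main_contra hφU hmaj v (fun j => hatom _) (fun j => hphi _)
      (fun i j h => hdisj _ _ (fun he => h (hmono.injective he))) ?_
    intro w
    refine Summable.of_nonneg_of_le ?_ ?_ summable_geometric_two
    · intro j
      split
      · exact mul_nonneg (by positivity) (hZpos (f j)).le
      · exact le_refl 0
    · intro j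
      have hb : ((j : ℝ) + 1) * Z (v j) ≤ (1/2 : ℝ) ^ j := by
        have h1 : Z (v j) ≤ (1/2 : ℝ) ^ j / ((j : ℝ) + 1) := (hfZ j).le
        have h2 : (0 : ℝ) < (j : ℝ) + 1 := by positivity
        calc ((j : ℝ) + 1) * Z (v j) ≤ ((j : ℝ) + 1) * ((1/2 : ℝ) ^ j / ((j : ℝ) + 1)) :=
              mul_le_mul_of_nonneg_left h1 h2.le
          _ = (1/2 : ℝ) ^ j := by field_simp
      split
      · exact hb
      · positivity
end

section
/- Let E₀, E₁ be vector lattices. Then U_{σc}(E₀ ⊕ E₁, ℝ) decomposes as the direct sum of bands U_{σc}(E₀, ℝ) ⊕ U_{σc}(E₁, ℝ), where a pair (f₀, f₁) corresponds to the functional (x₀, x₁) ↦ f₀(x₀) + f₁(x₁), and these two bands are mutually disjoint: if f₀ ∈ U_{σc}(E₀,ℝ)₊ and f₁ ∈ U_{σc}(E₁,ℝ)₊ (extended by zero to E₀ ⊕ E₁), then f₀ ∧ f₁ = 0. -/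
/-- Lateral convergence of a sequence: the terms are increasing fragments of `x`
which order converge to `x`. -/
def LatTendsto {E : Type*} [Lattice E] [AddCommGroup E]
    [CovariantClass E E (· + ·) (· ≤ ·)] [Module ℝ E] (s : ℕ → E) (x : E) : Prop :=
  (∀ n m : ℕ, n < m → IsFragment (s n) (s m)) ∧ (∀ n : ℕ, IsFragment (s n) x) ∧
  ∃ b : ℕ → E, Antitone b ∧ IsGLB (Set.range b) 0 ∧ ∀ n : ℕ, |s n - x| ≤ b n

/-- σ-lateral continuity of a functional (order convergence in `ℝ` is the usual
convergence). -/
def SigmaLatCont {E : Type*} [Lattice E] [AddCommGroup E]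
    [CovariantClass E E (· + ·) (· ≤ ·)] [Module ℝ E] (φ : E → ℝ) : Prop :=
  ∀ (s : ℕ → E) (x : E), LatTendsto s x →
    Filter.Tendsto (fun n => φ (s n)) Filter.atTop (nhds (φ x))

/-- The meet of two positive abstract Uryson functionals, via
`(f ∧ g)(x) = inf {f y + g z : x = y ⊔ z}`. -/
noncomputable def uMeet2 {E : Type*} [Lattice E] [AddCommGroup E]
    [CovariantClass E E (· + ·) (· ≤ ·)] [Module ℝ E] (f g : E → ℝ) (x : E) : ℝ :=
  sInf {r : ℝ | ∃ y : E, IsFragment y x ∧ r = f y + g (x - y)}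

instance {α β : Type*} [Preorder α] [Preorder β] [Add α] [Add β]
    [CovariantClass α α (· + ·) (· ≤ ·)] [CovariantClass β β (· + ·) (· ≤ ·)] :
    CovariantClass (α × β) (α × β) (· + ·) (· ≤ ·) :=
  ⟨fun c a b h => ⟨@CovariantClass.elim α α (· + ·) (· ≤ ·) _ c.1 _ _ h.1,
    @CovariantClass.elim β β (· + ·) (· ≤ ·) _ c.2 _ _ h.2⟩⟩


section Aux

variable {E₀ : Type*} [Lattice E₀] [AddCommGroup E₀]
    [CovariantClass E₀ E₀ (· + ·) (· ≤ ·)] [Module ℝ E₀]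
variable {E₁ : Type*} [Lattice E₁] [AddCommGroup E₁]
    [CovariantClass E₁ E₁ (· + ·) (· ≤ ·)] [Module ℝ E₁]

lemma mk_eq_zero' {a : E₀} {b : E₁} (h1 : a = 0) (h2 : b = 0) :
    ((a, b) : E₀ × E₁) = 0 := by rw [h1, h2]; rfl

lemma disj_fst' {x y : E₀ × E₁} (h : |x| ⊓ |y| = 0) : |x.1| ⊓ |y.1| = 0 :=
  congrArg Prod.fst h

lemma disj_snd' {x y : E₀ × E₁} (h : |x| ⊓ |y| = 0) : |x.2| ⊓ |y.2| = 0 :=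
  congrArg Prod.snd h

lemma frag_fst' {z x : E₀ × E₁} (h : IsFragment z x) : IsFragment z.1 x.1 :=
  congrArg Prod.fst h

lemma frag_snd' {z x : E₀ × E₁} (h : IsFragment z x) : IsFragment z.2 x.2 :=
  congrArg Prod.snd h

lemma glb_fst' {b : ℕ → E₀ × E₁} (h : IsGLB (Set.range b) 0) :
    IsGLB (Set.range fun n => (b n).1) (0 : E₀) := by
  constructor
  · rintro y ⟨n, rfl⟩
    exact (h.1 (Set.mem_range_self n)).1
  · intro c hc
    have hcb : ((c, (0 : E₁)) : E₀ × E₁) ≤ 0 := by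
      apply h.2
      rintro y ⟨n, rfl⟩
      exact ⟨hc (Set.mem_range_self n), (h.1 (Set.mem_range_self n)).2⟩
    exact hcb.1

lemma glb_snd' {b : ℕ → E₀ × E₁} (h : IsGLB (Set.range b) 0) :
    IsGLB (Set.range fun n => (b n).2) (0 : E₁) := by
  constructor
  · rintro y ⟨n, rfl⟩
    exact (h.1 (Set.mem_range_self n)).2
  · intro c hc
    have hcb : (((0 : E₀), c) : E₀ × E₁) ≤ 0 := by
      apply h.2
      rintro y ⟨n, rfl⟩
      exact ⟨(h.1 (Set.mem_range_self n)).1, hc (Set.mem_range_self n)⟩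
    exact hcb.2

lemma glb_inl' {b : ℕ → E₀} (h : IsGLB (Set.range b) 0) :
    IsGLB (Set.range fun n => ((b n, 0) : E₀ × E₁)) 0 := by
  constructor
  · rintro y ⟨n, rfl⟩
    exact ⟨h.1 (Set.mem_range_self n), le_refl 0⟩
  · intro c hc
    refine ⟨h.2 ?_, (hc (Set.mem_range_self 0)).2⟩
    rintro y ⟨n, rfl⟩
    exact (hc (Set.mem_range_self n)).1

lemma glb_inr' {b : ℕ → E₁} (h : IsGLB (Set.range b) 0) :
    IsGLB (Set.range fun n => (((0 : E₀), b n) : E₀ × E₁)) 0 := by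
  constructor
  · rintro y ⟨n, rfl⟩
    exact ⟨le_refl 0, h.1 (Set.mem_range_self n)⟩
  · intro c hc
    refine ⟨(hc (Set.mem_range_self 0)).1, h.2 ?_⟩
    rintro y ⟨n, rfl⟩
    exact (hc (Set.mem_range_self n)).2

lemma inl_disj' {x y : E₀} (h : |x| ⊓ |y| = 0) :
    |((x, 0) : E₀ × E₁)| ⊓ |((y, 0) : E₀ × E₁)| = 0 := by
  have e : |((x, 0) : E₀ × E₁)| ⊓ |((y, 0) : E₀ × E₁)|
      = (|x| ⊓ |y|, |(0 : E₁)| ⊓ |(0 : E₁)|) := rfl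
  rw [e]
  exact mk_eq_zero' h (by simp)

lemma inr_disj' {x y : E₁} (h : |x| ⊓ |y| = 0) :
    |(((0 : E₀), x) : E₀ × E₁)| ⊓ |(((0 : E₀), y) : E₀ × E₁)| = 0 := by
  have e : |(((0 : E₀), x) : E₀ × E₁)| ⊓ |(((0 : E₀), y) : E₀ × E₁)|
      = (|(0 : E₀)| ⊓ |(0 : E₀)|, |x| ⊓ |y|) := rfl
  rw [e]
  exact mk_eq_zero' (by simp) h

lemma inl_frag' {z x : E₀} (h : IsFragment z x) :
    IsFragment ((z, 0) : E₀ × E₁) (x, 0) := by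
  unfold IsFragment at h ⊢
  have e : ((x, 0) : E₀ × E₁) - (z, 0) = (x - z, 0) := by
    exact Prod.ext_iff.mpr ⟨rfl, by simp⟩
  rw [e]
  exact inl_disj' h

lemma inr_frag' {z x : E₁} (h : IsFragment z x) :
    IsFragment (((0 : E₀), z) : E₀ × E₁) (0, x) := by
  unfold IsFragment at h ⊢
  have e : (((0 : E₀), x) : E₀ × E₁) - (0, z) = (0, x - z) := by
    exact Prod.ext_iff.mpr ⟨by simp, rfl⟩
  rw [e]
  exact inr_disj' h

lemma orthadd_zero' {f : E₀ → ℝ} (h : IsOrthAdd f) : f 0 = 0 := by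
  have h0 : f 0 = f 0 + f 0 := by simpa using h 0 0 (by simp)
  linarith

end Aux

/-- `U_{σc}(E₀ ⊕ E₁, ℝ) = U_{σc}(E₀, ℝ) ⊕ U_{σc}(E₁, ℝ)`, the two
summands being mutually disjoint bands. -/
theorem sigma_lat_cont_direct_sum_decomposition
    {E₀ : Type*} [Lattice E₀] [AddCommGroup E₀]
    [CovariantClass E₀ E₀ (· + ·) (· ≤ ·)] [Module ℝ E₀]
    {E₁ : Type*} [Lattice E₁] [AddCommGroup E₁]
    [CovariantClass E₁ E₁ (· + ·) (· ≤ ·)] [Module ℝ E₁] :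
    -- each pair `(f₀, f₁)` yields a σ-laterally continuous Uryson functional on `E₀ ⊕ E₁`
    (∀ (f₀ : E₀ → ℝ) (f₁ : E₁ → ℝ),
      (IsUryson f₀ ∧ SigmaLatCont f₀) → (IsUryson f₁ ∧ SigmaLatCont f₁) →
      (IsUryson (fun p : E₀ × E₁ => f₀ p.1 + f₁ p.2) ∧
        SigmaLatCont (fun p : E₀ × E₁ => f₀ p.1 + f₁ p.2))) ∧
    -- every σ-laterally continuous Uryson functional on `E₀ ⊕ E₁` decomposes
    (∀ f : E₀ × E₁ → ℝ, (IsUryson f ∧ SigmaLatCont f) →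
      ∃ (f₀ : E₀ → ℝ) (f₁ : E₁ → ℝ),
        (IsUryson f₀ ∧ SigmaLatCont f₀) ∧ (IsUryson f₁ ∧ SigmaLatCont f₁) ∧
        f = fun p : E₀ × E₁ => f₀ p.1 + f₁ p.2) ∧
    -- the two summands are mutually disjoint
    (∀ (f₀ : E₀ → ℝ) (f₁ : E₁ → ℝ),
      (IsUryson f₀ ∧ SigmaLatCont f₀) → (IsUryson f₁ ∧ SigmaLatCont f₁) →
      (∀ x : E₀, 0 ≤ f₀ x) → (∀ x : E₁, 0 ≤ f₁ x) →
      ∀ p : E₀ × E₁,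
        uMeet2 (fun q : E₀ × E₁ => f₀ q.1) (fun q : E₀ × E₁ => f₁ q.2) p = 0)  := by
  constructor
  · -- Part 1
    rintro f₀ f₁ ⟨⟨h₀oa, h₀ob⟩, h₀c⟩ ⟨⟨h₁oa, h₁ob⟩, h₁c⟩
    refine ⟨⟨?_, ?_⟩, ?_⟩
    · intro x y hxy
      simp only [Prod.fst_add, Prod.snd_add, h₀oa _ _ (disj_fst' hxy),
        h₁oa _ _ (disj_snd' hxy)]
      ring
    · intro a b
      obtain ⟨c₀, d₀, hb₀⟩ := h₀ob a.1 b.1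
      obtain ⟨c₁, d₁, hb₁⟩ := h₁ob a.2 b.2
      exact ⟨c₀ + c₁, d₀ + d₁, fun x hax hxb =>
        ⟨add_le_add (hb₀ x.1 hax.1 hxb.1).1 (hb₁ x.2 hax.2 hxb.2).1,
         add_le_add (hb₀ x.1 hax.1 hxb.1).2 (hb₁ x.2 hax.2 hxb.2).2⟩⟩
    · rintro s x ⟨hf, hfx, b, hb, hglb, hle⟩
      have t0 := h₀c (fun n => (s n).1) x.1
        ⟨fun n m h => frag_fst' (hf n m h), fun n => frag_fst' (hfx n),
         fun n => (b n).1, fun _ _ h => (hb h).1, glb_fst' hglb,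
         fun n => (hle n).1⟩
      have t1 := h₁c (fun n => (s n).2) x.2
        ⟨fun n m h => frag_snd' (hf n m h), fun n => frag_snd' (hfx n),
         fun n => (b n).2, fun _ _ h => (hb h).2, glb_snd' hglb,
         fun n => (hle n).2⟩
      exact t0.add t1
  constructor
  · -- Part 2
    rintro f ⟨⟨foa, fob⟩, fc⟩
    refine ⟨fun x => f (x, 0), fun y => f (0, y), ⟨⟨?_, ?_⟩, ?_⟩, ⟨⟨?_, ?_⟩, ?_⟩, ?_⟩
    · intro x y h
      have e : (((x + y : E₀), (0 : E₁)) : E₀ × E₁) = (x, 0) + (y, 0) := by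
        exact Prod.ext_iff.mpr ⟨rfl, by simp⟩
      simp only [e, foa _ _ (inl_disj' h)]
    · intro a b
      obtain ⟨c, d, h⟩ := fob (a, 0) (b, 0)
      exact ⟨c, d, fun x hax hxb => h (x, 0) ⟨hax, le_refl 0⟩ ⟨hxb, le_refl 0⟩⟩
    · rintro s x ⟨hf, hfx, b, hb, hglb, hle⟩
      exact fc (fun n => (s n, 0)) (x, 0)
        ⟨fun n m h => inl_frag' (hf n m h), fun n => inl_frag' (hfx n),
         fun n => ((b n, 0) : E₀ × E₁), fun _ _ h => ⟨hb h, le_refl 0⟩,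
         glb_inl' hglb, fun n => by
           have e : ((s n, 0) : E₀ × E₁) - (x, 0) = (s n - x, 0) :=
             Prod.ext_iff.mpr ⟨rfl, by simp⟩
           rw [e]
           exact ⟨hle n, show |(0 : E₁)| ≤ 0 from abs_zero.le⟩⟩
    · intro x y h
      have e : (((0 : E₀), (x + y : E₁)) : E₀ × E₁) = (0, x) + (0, y) := by
        exact Prod.ext_iff.mpr ⟨by simp, rfl⟩
      simp only [e, foa _ _ (inr_disj' h)]
    · intro a b
      obtain ⟨c, d, h⟩ := fob (0, a) (0, b)
      exact ⟨c, d, fun x hax hxb => h (0, x) ⟨le_refl 0, hax⟩ ⟨le_refl 0, hxb⟩⟩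
    · rintro s x ⟨hf, hfx, b, hb, hglb, hle⟩
      exact fc (fun n => (0, s n)) (0, x)
        ⟨fun n m h => inr_frag' (hf n m h), fun n => inr_frag' (hfx n),
         fun n => (((0 : E₀), b n) : E₀ × E₁), fun _ _ h => ⟨le_refl 0, hb h⟩,
         glb_inr' hglb, fun n => by
           have e : (((0 : E₀), s n) : E₀ × E₁) - (0, x) = (0, s n - x) :=
             Prod.ext_iff.mpr ⟨by simp, rfl⟩
           rw [e]
           exact ⟨show |(0 : E₀)| ≤ 0 from abs_zero.le, hle n⟩⟩
    · funext p
      have ep : p = (p.1, 0) + (0, p.2) := by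
        exact Prod.ext_iff.mpr ⟨by simp, by simp⟩
      have hd : |((p.1, 0) : E₀ × E₁)| ⊓ |(((0 : E₀), p.2) : E₀ × E₁)| = 0 := by
        have e : |((p.1, 0) : E₀ × E₁)| ⊓ |(((0 : E₀), p.2) : E₀ × E₁)|
            = (|p.1| ⊓ |(0 : E₀)|, |(0 : E₁)| ⊓ |p.2|) := rfl
        rw [e]
        refine mk_eq_zero' ?_ ?_
        · rw [abs_zero]
          exact inf_eq_right.mpr (abs_nonneg _)
        · rw [abs_zero]
          exact inf_eq_left.mpr (abs_nonneg _)
      conv_lhs => rw [ep]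
      exact foa _ _ hd
  · -- Part 3
    rintro f₀ f₁ ⟨⟨f₀oa, _⟩, _⟩ ⟨⟨f₁oa, _⟩, _⟩ h₀ h₁ p
    have f₀0 : f₀ 0 = 0 := orthadd_zero' f₀oa
    have f₁0 : f₁ 0 = 0 := orthadd_zero' f₁oa
    have hfrag : IsFragment (((0 : E₀), p.2) : E₀ × E₁) p := by
      unfold IsFragment
      have e1 : p - ((0 : E₀), p.2) = (p.1, 0) := Prod.ext_iff.mpr ⟨by simp, by simp⟩
      rw [e1]
      have e : |(((0 : E₀), p.2) : E₀ × E₁)| ⊓ |((p.1, 0) : E₀ × E₁)|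
          = (|(0 : E₀)| ⊓ |p.1|, |p.2| ⊓ |(0 : E₁)|) := rfl
      rw [e]
      refine mk_eq_zero' ?_ ?_
      · rw [abs_zero]; exact inf_eq_left.mpr (abs_nonneg _)
      · rw [abs_zero]; exact inf_eq_right.mpr (abs_nonneg _)
    have hmem : (0 : ℝ) ∈ {r : ℝ | ∃ y : E₀ × E₁, IsFragment y p ∧
        r = f₀ y.1 + f₁ (p - y).2} := by
      refine ⟨((0 : E₀), p.2), hfrag, ?_⟩
      have e2 : (p - (((0 : E₀), p.2) : E₀ × E₁)).2 = 0 := by simp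
      simp [e2, f₀0, f₁0]
    have hlb : ∀ r ∈ {r : ℝ | ∃ y : E₀ × E₁, IsFragment y p ∧
        r = f₀ y.1 + f₁ (p - y).2}, (0 : ℝ) ≤ r := by
      rintro r ⟨y, -, rfl⟩
      exact add_nonneg (h₀ _) (h₁ _)
    unfold uMeet2
    exact le_antisymm (csInf_le ⟨0, hlb⟩ hmem) (le_csInf ⟨0, hmem⟩ hlb)
end
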